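/- Fix A > 0, an integer k ≥ 1, and a real q > (k+1)/(2k). For each n let r_n = n^{−q} and let G(n, r_n, A) be the random geometric graph on the flat torus T²_A with n i.i.d. uniform points and radius r_n. Then the expected Betti number E[β_{k,k}(G(n, r_n, A))] tends to 0 as n → ∞, where β_{k,k}(G) is the rank of the eulerian magnitude homology group EMH_{k,k}(G). -/

import Mathlib

open scoped Classical

variable {V : Type*}

/-- Length of the walk described by a list of landmarks: sum of path-metric
distances between consecutive entries (`⊤`-valued if some pair is unreachable). -/
noncomputable def mlen (G : SimpleGraph V) : List V → ℕ∞
  | [] => 0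
  | [_] => 0
  | a :: b :: t => G.edist a b + mlen G (b :: t)

/-- A list of landmarks is a trail if consecutive entries are distinct and reachable. -/
def IsTrailList (G : SimpleGraph V) (l : List V) : Prop :=
  l.Chain' fun a b => a ≠ b ∧ G.Reachable a b

/-- `trails G k ℓ` is the set `T_{k,ℓ}(G)` of `k`-trails of length `ℓ`,
encoded as lists with `k+1` entries. -/
def trails (G : SimpleGraph V) (k ℓ : ℕ) : Set (List V) :=
  {l | l.length = k + 1 ∧ IsTrailList G l ∧ mlen G l = (ℓ : ℕ∞)}

/-- `etrails G k ℓ` is the set `ET_{k,ℓ}(G)` of eulerian `k`-trails of length `ℓ`. -/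
def etrails (G : SimpleGraph V) (k ℓ : ℕ) : Set (List V) :=
  {l | l ∈ trails G k ℓ ∧ l.Nodup}

/-- Boundary of a single generator: `∂_{·,ℓ}(x₀,…,x_k) = Σ_{i=1}^{k-1} (-1)^i ∂^i`,
where `∂^i` deletes the `i`-th landmark if this does not change the length. -/
noncomputable def bdryElt (G : SimpleGraph V) (ℓ : ℕ) (l : List V) : List V →₀ ℤ :=
  ∑ i ∈ Finset.Ioo 0 (l.length - 1),
    if mlen G (l.eraseIdx i) = (ℓ : ℕ∞) then ((-1 : ℤ) ^ i) • Finsupp.single (l.eraseIdx i) 1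
    else 0

/-- The magnitude differential (length parameter `ℓ`) on the ambient free abelian group
on all landmark lists.  Its restriction to `MC_{k,ℓ}(G)` (chains supported on
`trails G k ℓ`) is `∂_{k,ℓ}`. -/
noncomputable def bdry (G : SimpleGraph V) (ℓ : ℕ) : (List V →₀ ℤ) →ₗ[ℤ] (List V →₀ ℤ) :=
  Finsupp.lsum ℤ fun l => LinearMap.toSpanSingleton ℤ _ (bdryElt G ℓ l)

/-- `MC_{k,ℓ}(G)`: the free abelian group on `T_{k,ℓ}(G)`, realized as the submodule of
finitely supported `ℤ`-valued functions supported on trails. -/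
noncomputable def MC (G : SimpleGraph V) (k ℓ : ℕ) : Submodule ℤ (List V →₀ ℤ) :=
  Finsupp.supported ℤ ℤ (trails G k ℓ)

/-- `EMC_{k,ℓ}(G)`: the free abelian group on `ET_{k,ℓ}(G)`. -/
noncomputable def EMC (G : SimpleGraph V) (k ℓ : ℕ) : Submodule ℤ (List V →₀ ℤ) :=
  Finsupp.supported ℤ ℤ (etrails G k ℓ)

/-- `EMH_{k,k}(G) = ker(∂_{k,k}|_{EMC_{k,k}(G)})`, the first-diagonal eulerian magnitude
homology group (`EMC_{k+1,k}(G) = 0`, so homology is just the kernel). -/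
noncomputable def EMHkk (G : SimpleGraph V) (k : ℕ) : Submodule ℤ (List V →₀ ℤ) :=
  EMC G k k ⊓ LinearMap.ker (bdry G k)

/-- `MH_{k,k}(G) = ker(∂_{k,k}|_{MC_{k,k}(G)})`. -/
noncomputable def MHkk (G : SimpleGraph V) (k : ℕ) : Submodule ℤ (List V →₀ ℤ) :=
  MC G k k ⊓ LinearMap.ker (bdry G k)

/-- `β_{k,k}(G)`, the rank of `EMH_{k,k}(G)`. -/
noncomputable def emBetti (G : SimpleGraph V) (k : ℕ) : ℕ :=
  Module.finrank ℤ (EMHkk G k)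

/-- `c(G,H)`: the number of vertex subsets of `G` whose induced subgraph is isomorphic
to `H`. -/
noncomputable def subgraphCount (G : SimpleGraph V) {W : Type*} (H : SimpleGraph W) : ℕ :=
  Set.ncard {s : Set V | Nonempty ((G.induce s) ≃g H)}

open MeasureTheory
open scoped ENNReal

/-- The flat-torus distance on `ℝ²` for the torus `T²_A = ℝ²/(√A·ℤ²)`:
`d_T(x,y) = min_{w ∈ √A·ℤ²} ‖x - y - w‖` (Euclidean norm). -/
noncomputable def torusDist (A : ℝ) (x y : EuclideanSpace ℝ (Fin 2)) : ℝ :=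
  ⨅ w : ℤ × ℤ, ‖x - y - Real.sqrt A • (WithLp.equiv 2 (Fin 2 → ℝ)).symm ![(w.1 : ℝ), (w.2 : ℝ)]‖

/-- The fundamental domain `[0,√A)²` of the torus `T²_A`. -/
def torusBox (A : ℝ) : Set (EuclideanSpace ℝ (Fin 2)) :=
  {x | ∀ i, x i ∈ Set.Ico (0 : ℝ) (Real.sqrt A)}

/-- The uniform (normalized Haar) probability measure on `T²_A`, realized as the
normalized Lebesgue measure on the fundamental domain `[0,√A)²`. -/
noncomputable def torusUnif (A : ℝ) : Measure (EuclideanSpace ℝ (Fin 2)) :=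
  (ENNReal.ofReal A)⁻¹ • volume.restrict (torusBox A)

/-- The random geometric graph on `n` sampled points of `T²_A` with radius `ρ`:
distinct `i, j` are adjacent iff `d_T(p_i, p_j) ≤ ρ`. -/
noncomputable def rggGraph (A ρ : ℝ) {n : ℕ} (P : Fin n → EuclideanSpace ℝ (Fin 2)) :
    SimpleGraph (Fin n) :=
  SimpleGraph.fromRel fun i j => torusDist A (P i) (P j) ≤ ρ

/-- The law of `n` i.i.d. uniform points on `T²_A`. -/
noncomputable def rggSample (A : ℝ) (n : ℕ) :
    Measure (Fin n → EuclideanSpace ℝ (Fin 2)) :=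
  Measure.pi fun _ => torusUnif A

/-! An eulerian `k`-trail of length `k` makes `k` steps of length one, so it is an injective path
`Fin (k + 1) → Fin n` along edges, and `β_{k,k}` is at most the number of such paths. For a fixed
injective index map the sampled points are independent and uniform, so integrating out the last
point repeatedly bounds the probability that all `k` steps have torus distance `≤ r` by
`(C r² / A)^k`, where `C r²` bounds the area of a torus disc. Hence
`E β_{k,k} ≤ n^{k+1} (C r_n² / A)^k`, a constant times `n^{k+1-2qk}`, which tends to `0` because
`q > (k+1)/(2k)`. -/

open Finset

section Trails

variable (G : SimpleGraph V)

lemma length_sub_one_le_mlen :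
    ∀ {l : List V}, IsTrailList G l → ((l.length - 1 : ℕ) : ℕ∞) ≤ mlen G l
  | [], _ | [_], _ => by simp [mlen]
  | a :: b :: t, h => by
    obtain ⟨⟨hab, -⟩, ht⟩ := List.isChain_cons_cons.mp h
    have ih := length_sub_one_le_mlen ht
    simp only [mlen, List.length_cons, Nat.add_sub_cancel] at ih ⊢
    push_cast
    rw [add_comm]
    exact add_le_add (Order.one_le_iff_pos.mpr (SimpleGraph.edist_pos_of_ne hab)) ih

lemma isChain_adj_of_mlen_eq :
    ∀ {l : List V}, IsTrailList G l → mlen G l = ((l.length - 1 : ℕ) : ℕ∞) →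
      l.IsChain G.Adj
  | [], _, _ | [_], _, _ => by simp
  | a :: b :: t, h, hm => by
    obtain ⟨⟨hab, -⟩, ht⟩ := List.isChain_cons_cons.mp h
    have hlen := length_sub_one_le_mlen G ht
    simp only [mlen, List.length_cons, Nat.add_sub_cancel] at hlen hm
    have hab1 : G.edist a b = 1 := by
      refine le_antisymm ?_ (Order.one_le_iff_pos.mpr (SimpleGraph.edist_pos_of_ne hab))
      have : G.edist a b + t.length ≤ 1 + t.length := by
        calc G.edist a b + t.length ≤ G.edist a b + mlen G (b :: t) := add_le_add_right hlen _
          _ = 1 + t.length := by rw [hm]; push_cast; ring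
      exact (ENat.add_le_add_iff_right (ENat.natCast_ne_top _)).mp this
    rw [List.isChain_cons_cons, ← SimpleGraph.edist_eq_one_iff_adj]
    refine ⟨hab1, isChain_adj_of_mlen_eq ht ?_⟩
    rw [hab1, add_comm, Nat.cast_succ] at hm
    simpa using ENat.add_left_injective_of_ne_top ENat.one_ne_top hm

lemma etrails_finite [Finite V] (k ℓ : ℕ) : (etrails G k ℓ).Finite :=
  (List.finite_length_eq V (k + 1)).subset fun _ hl => hl.1.1

lemma emBetti_le_ncard_etrails [Finite V] (k : ℕ) : emBetti G k ≤ (etrails G k k).ncard := by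
  have := (etrails_finite G k k).fintype
  let e : EMC G k k ≃ₗ[ℤ] (etrails G k k →₀ ℤ) := Finsupp.supportedEquivFinsupp _
  have : Module.Finite ℤ (EMC G k k) := Module.Finite.equiv e.symm
  calc emBetti G k ≤ Module.finrank ℤ (EMC G k k) := Submodule.finrank_mono inf_le_left
    _ = (etrails G k k).ncard := by
      rw [e.finrank_eq, Module.finrank_finsupp_self, Set.ncard_eq_toFinset_card', Set.toFinset_card]

lemma ncard_etrails_le_card_paths [Fintype V] [DecidableEq V] (k : ℕ) :
    (etrails G k k).ncard ≤
      #{t : Fin (k + 1) → V | Function.Injective t ∧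
        ∀ j : Fin k, G.Adj (t j.castSucc) (t j.succ)} := by
  set paths := ({t : Fin (k + 1) → V | Function.Injective t ∧
    ∀ j : Fin k, G.Adj (t j.castSucc) (t j.succ)} : Finset _)
  have hsub : etrails G k k ⊆ paths.image List.ofFn := by
    rintro l ⟨⟨hlen, htrail, hmlen⟩, hnodup⟩
    have hwalk := isChain_adj_of_mlen_eq G htrail (by simpa [hlen] using hmlen)
    refine Finset.mem_coe.mpr (Finset.mem_image.mpr ⟨fun j => l[j.cast hlen.symm], ?_, ?_⟩)
    · refine Finset.mem_filter.mpr ⟨Finset.mem_univ _, fun i j hij => ?_, fun j => ?_⟩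
      · exact Fin.ext (by simpa using (hnodup.getElem_inj_iff).mp hij)
      · exact List.isChain_iff_getElem.mp hwalk j (by simp [hlen])
    · exact List.ext_getElem (by simp [hlen]) fun i _ _ => List.getElem_ofFn ..
  calc (etrails G k k).ncard ≤ (paths.image List.ofFn : Set (List V)).ncard :=
        Set.ncard_le_ncard hsub (Finset.finite_toSet _)
    _ ≤ #paths := (Set.ncard_coe_finset _).trans_le Finset.card_image_le

end Trails

section Chains

variable {E : Type*} [MeasurableSpace E] {D : E → E → Prop}

lemma measurableSet_setOf_chain {ι : Type*} (hD : MeasurableSet {p : E × E | D p.1 p.2}) {m : ℕ}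
    (t : Fin (m + 1) → ι) :
    MeasurableSet {P : ι → E | ∀ j : Fin m, D (P (t j.castSucc)) (P (t j.succ))} := by
  simp only [Set.ofPred_forall]
  exact .iInter fun j =>
    (show Measurable fun P : ι → E => (P (t j.castSucc), P (t j.succ)) by fun_prop) hD

lemma measurePreserving_comp_of_injective {ι κ : Type*} [Fintype ι] [Fintype κ]
    (μ : Measure E) [IsProbabilityMeasure μ] {t : κ → ι} (ht : Function.Injective t) :
    MeasurePreserving (fun P : ι → E => P ∘ t) (Measure.pi fun _ => μ)
      (Measure.pi fun _ => μ) := by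
  have hsplit : MeasurePreserving
      (MeasurableEquiv.piEquivPiSubtypeProd (fun _ : ι => E) (· ∈ Set.range t))
      (Measure.pi fun _ => μ)
      ((Measure.pi fun _ : Set.range t => μ).prod (Measure.pi fun _ => μ)) := by
    convert measurePreserving_piEquivPiSubtypeProd (fun _ : ι => μ) (· ∈ Set.range t)
  have hreindex :=
    measurePreserving_piCongrLeft (fun _ : Set.range t => μ) (Equiv.ofInjective t ht)
  convert hreindex.symm.comp (measurePreserving_fst.comp hsplit)
  ext P
  simp [MeasurableEquiv.piCongrLeft]

variable (μ : Measure E) [IsProbabilityMeasure μ] {ε : ℝ≥0∞}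

lemma measure_pi_chain_le (hD : MeasurableSet {p : E × E | D p.1 p.2})
    (hε : ∀ x, μ {y | D x y} ≤ ε) :
    ∀ m : ℕ, Measure.pi (fun _ : Fin (m + 1) => μ)
      {x | ∀ j : Fin m, D (x j.castSucc) (x j.succ)} ≤ ε ^ m
  | 0 => by simp
  | m + 1 => by
    set C := {x : Fin (m + 1) → E | ∀ j : Fin m, D (x j.castSucc) (x j.succ)}
    set S := {p : E × (Fin (m + 1) → E) | p.2 ∈ C ∧ D (p.2 (Fin.last m)) p.1}
    have hC : MeasurableSet C := measurableSet_setOf_chain hD id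
    have hS : MeasurableSet S := (measurable_snd hC).inter
      ((show Measurable fun p : E × (Fin (m + 1) → E) => (p.2 (Fin.last m), p.1) by fun_prop) hD)
    have hsplit := measurePreserving_piFinSuccAbove (fun _ : Fin (m + 2) => μ) (Fin.last (m + 1))
    have hset : {x : Fin (m + 2) → E | ∀ j : Fin (m + 1), D (x j.castSucc) (x j.succ)} =
        MeasurableEquiv.piFinSuccAbove (fun _ => E) (Fin.last (m + 1)) ⁻¹' S := by
      ext x
      simp [S, C, Fin.forall_fin_succ', Fin.init, and_comm]
    rw [hset, hsplit.measure_preimage hS.nullMeasurableSet, Measure.prod_apply_symm hS]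
    calc ∫⁻ z, μ ((·, z) ⁻¹' S) ∂Measure.pi (fun _ => μ)
        ≤ ∫⁻ z, C.indicator (fun _ => ε) z ∂Measure.pi (fun _ => μ) := by
          refine lintegral_mono fun z => ?_
          by_cases hz : z ∈ C
          · simpa [S, hz] using hε (z (Fin.last m))
          · simp [S, hz]
      _ = ε * Measure.pi (fun _ => μ) C := lintegral_indicator_const hC ε
      _ ≤ ε * ε ^ m := by gcongr; exact measure_pi_chain_le hD hε m
      _ = ε ^ (m + 1) := (pow_succ' ε m).symm

lemma lintegral_card_injective_chains_le {ι : Type*} [Fintype ι] [DecidableEq ι]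
    (hD : MeasurableSet {p : E × E | D p.1 p.2}) (hε : ∀ x, μ {y | D x y} ≤ ε) (m : ℕ) :
    ∫⁻ P, (#{t : Fin (m + 1) → ι | Function.Injective t ∧
        ∀ j : Fin m, D (P (t j.castSucc)) (P (t j.succ))} : ℝ≥0∞)
        ∂Measure.pi (fun _ => μ) ≤
      (Fintype.card ι : ℝ≥0∞) ^ (m + 1) * ε ^ m := by
  set chains := fun t : Fin (m + 1) → ι =>
    {P : ι → E | ∀ j : Fin m, D (P (t j.castSucc)) (P (t j.succ))}
  have hcard : ∀ P : ι → E,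
      (#{t : Fin (m + 1) → ι | Function.Injective t ∧ P ∈ chains t} : ℝ≥0∞) =
        ∑ t ∈ {t | Function.Injective t}, (chains t).indicator 1 P := by
    intro P
    rw [← Finset.filter_filter, Finset.card_filter]
    push_cast
    simp [Set.indicator_apply]
  have hchain : ∀ t : Fin (m + 1) → ι, Function.Injective t →
      Measure.pi (fun _ => μ) (chains t) ≤ ε ^ m := fun t ht =>
    ((measurePreserving_comp_of_injective μ ht).measure_preimage
      (measurableSet_setOf_chain hD id).nullMeasurableSet).trans_le
        (measure_pi_chain_le μ hD hε m)
  calc ∫⁻ P, (#{t : Fin (m + 1) → ι | Function.Injective t ∧ P ∈ chains t} : ℝ≥0∞)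
        ∂Measure.pi (fun _ => μ)
      = ∑ t ∈ {t | Function.Injective t}, Measure.pi (fun _ => μ) (chains t) := by
        simp_rw [hcard]
        rw [lintegral_finsetSum _ fun t _ =>
          measurable_one.indicator (measurableSet_setOf_chain hD t)]
        simp_rw [lintegral_indicator_one (measurableSet_setOf_chain hD _)]
        rfl
    _ ≤ ∑ _t ∈ ({t | Function.Injective t} : Finset (Fin (m + 1) → ι)), ε ^ m :=
        Finset.sum_le_sum fun t ht => hchain t (Finset.mem_filter.mp ht).2
    _ ≤ (Fintype.card ι : ℝ≥0∞) ^ (m + 1) * ε ^ m := by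
        rw [Finset.sum_const, nsmul_eq_mul]
        gcongr
        exact_mod_cast (Finset.card_filter_le _ _).trans (by simp)

end Chains

lemma torusDist_comm (A : ℝ) (x y : EuclideanSpace ℝ (Fin 2)) :
    torusDist A x y = torusDist A y x := by
  rw [torusDist, torusDist, ← (Equiv.neg (ℤ × ℤ)).iInf_comp]
  congr 1 with w
  rw [← norm_neg]
  congr 1
  ext i
  fin_cases i <;> simp <;> ring

lemma measurable_torusDist (A : ℝ) :
    Measurable fun p : EuclideanSpace ℝ (Fin 2) × EuclideanSpace ℝ (Fin 2) =>
      torusDist A p.1 p.2 :=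
  .iInf fun _ => (continuous_fst.sub continuous_snd |>.sub continuous_const).norm.measurable

lemma torusBox_eq_preimage (A : ℝ) :
    torusBox A = (MeasurableEquiv.toLp 2 (Fin 2 → ℝ)).symm ⁻¹'
      Set.univ.pi fun _ => Set.Ico 0 (Real.sqrt A) := by
  ext x
  simp [torusBox, Set.mem_pi]

lemma measurableSet_torusBox (A : ℝ) : MeasurableSet (torusBox A) := by
  rw [torusBox_eq_preimage]
  exact (MeasurableEquiv.measurable _) (.univ_pi fun _ => measurableSet_Ico)

lemma volume_torusBox {A : ℝ} (hA : 0 < A) : volume (torusBox A) = ENNReal.ofReal A := by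
  rw [torusBox_eq_preimage, (EuclideanSpace.volume_preserving_symm_measurableEquiv_toLp
    (Fin 2)).measure_preimage (MeasurableSet.univ_pi fun _ => measurableSet_Ico).nullMeasurableSet,
    volume_pi_pi]
  simp [← ENNReal.ofReal_pow (Real.sqrt_nonneg A), hA.le]

lemma isProbabilityMeasure_torusUnif {A : ℝ} (hA : 0 < A) : IsProbabilityMeasure (torusUnif A) :=
  ⟨by simp [torusUnif, volume_torusBox hA, ENNReal.inv_mul_cancel, hA]⟩

lemma mem_Icc_floor_div_of_abs_sub_mul_le {s a b : ℝ} {z : ℤ} (hs : 0 < s)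
    (hb : b ∈ Set.Ico 0 s) (h : |a - b - s * z| ≤ s) :
    z ∈ Finset.Icc (⌊a / s⌋ - 1) (⌊a / s⌋ + 1) := by
  obtain ⟨hb0, hbs⟩ := hb
  rw [abs_le] at h
  have hfloor := Int.floor_le (a / s)
  have hfloor' := Int.lt_floor_add_one (a / s)
  have ha : s * (a / s) = a := mul_div_cancel₀ a hs.ne'
  have hlow : (⌊a / s⌋ : ℝ) < z + 2 := by nlinarith
  have hup : (z : ℝ) < ⌊a / s⌋ + 2 := by nlinarith
  rw [Finset.mem_Icc]
  constructor
  · have : ⌊a / s⌋ < z + 2 := by exact_mod_cast hlow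
    omega
  · have : z < ⌊a / s⌋ + 2 := by exact_mod_cast hup
    omega

/-- Nine planar discs of radius `2 r` around lifts of `x` cover the torus ball: `2 r ≤ √A` pins
each lattice coordinate of a lift to three consecutive values. -/
lemma torusUnif_setOf_torusDist_le {A r : ℝ} (hA : 0 < A) (hr : 0 < r)
    (hrA : 2 * r ≤ Real.sqrt A) (x : EuclideanSpace ℝ (Fin 2)) :
    torusUnif A {y | torusDist A x y ≤ r} ≤ ENNReal.ofReal (36 * Real.pi * r ^ 2 / A) := by
  set s := Real.sqrt A
  have hs : 0 < s := Real.sqrt_pos.mpr hA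
  set lift : ℤ × ℤ → EuclideanSpace ℝ (Fin 2) := fun w =>
    x - s • (WithLp.equiv 2 (Fin 2 → ℝ)).symm ![(w.1 : ℝ), (w.2 : ℝ)]
  set F : Finset (ℤ × ℤ) := Finset.Icc (⌊x 0 / s⌋ - 1) (⌊x 0 / s⌋ + 1) ×ˢ
    Finset.Icc (⌊x 1 / s⌋ - 1) (⌊x 1 / s⌋ + 1)
  have hcover : {y | torusDist A x y ≤ r} ∩ torusBox A ⊆
      ⋃ w ∈ F, Metric.closedBall (lift w) (2 * r) := by
    rintro y ⟨hy, hybox⟩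
    obtain ⟨w, hw⟩ := exists_lt_of_ciInf_lt (hy.trans_lt (by linarith : r < 2 * r))
    have hcoord : ∀ i, |x i - y i - s * ![(w.1 : ℝ), (w.2 : ℝ)] i| ≤ s := fun i =>
      ((PiLp.norm_apply_le _ i).trans hw.le).trans hrA
    refine Set.mem_biUnion (x := w) (Finset.mem_product.mpr ⟨?_, ?_⟩) ?_
    · simpa using mem_Icc_floor_div_of_abs_sub_mul_le hs (hybox 0) (hcoord 0)
    · simpa using mem_Icc_floor_div_of_abs_sub_mul_le hs (hybox 1) (hcoord 1)
    · rw [Metric.mem_closedBall, dist_eq_norm, ← norm_neg, neg_sub, sub_right_comm]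
      exact hw.le
  have hcard : F.card = 9 := by
    have h3 (z : ℤ) : (z + 1 + 1 - (z - 1)).toNat = 3 := by omega
    simp [F, h3]
  calc torusUnif A {y | torusDist A x y ≤ r}
      = (ENNReal.ofReal A)⁻¹ * volume ({y | torusDist A x y ≤ r} ∩ torusBox A) := by
        rw [torusUnif, Measure.smul_apply, Measure.restrict_apply' (measurableSet_torusBox A),
          smul_eq_mul]
    _ ≤ (ENNReal.ofReal A)⁻¹ * ∑ w ∈ F, volume (Metric.closedBall (lift w) (2 * r)) := by
        gcongr
        exact (measure_mono hcover).trans (measure_biUnion_finset_le F _)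
    _ = ENNReal.ofReal (36 * Real.pi * r ^ 2 / A) := by
        simp only [EuclideanSpace.volume_closedBall_fin_two, Finset.sum_const, hcard, nsmul_eq_mul]
        rw [← ENNReal.ofReal_pow (by positivity), ← ENNReal.ofReal_natCast,
          ← ENNReal.ofReal_mul (by positivity), ← ENNReal.ofReal_mul (by positivity),
          ← ENNReal.ofReal_inv_of_pos hA, ← ENNReal.ofReal_mul (by positivity)]
        congr 1
        push_cast
        field_simp
        ring

lemma emBetti_rggGraph_le (A ρ : ℝ) {n : ℕ} (P : Fin n → EuclideanSpace ℝ (Fin 2)) (k : ℕ) :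
    emBetti (rggGraph A ρ P) k ≤ #{t : Fin (k + 1) → Fin n | Function.Injective t ∧
      ∀ j : Fin k, torusDist A (P (t j.castSucc)) (P (t j.succ)) ≤ ρ} := by
  refine (emBetti_le_ncard_etrails _ k).trans <| (ncard_etrails_le_card_paths _ k).trans <|
    Finset.card_le_card <|
      Finset.monotone_filter_right _ fun t _ ⟨hinj, hadj⟩ => ⟨hinj, fun j => ?_⟩
  obtain ⟨-, h | h⟩ := (SimpleGraph.fromRel_adj _ _ _).mp (hadj j)
  exacts [h, torusDist_comm A _ _ ▸ h]

lemma lintegral_emBetti_rggGraph_le {A ρ : ℝ} (hA : 0 < A) (hρ : 0 < ρ)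
    (hρA : 2 * ρ ≤ Real.sqrt A) (n k : ℕ) :
    ∫⁻ P, (emBetti (rggGraph A ρ P) k : ℝ≥0∞) ∂rggSample A n ≤
      ENNReal.ofReal ((n : ℝ) ^ (k + 1) * (36 * Real.pi * ρ ^ 2 / A) ^ k) := by
  have := isProbabilityMeasure_torusUnif hA
  unfold rggSample
  calc ∫⁻ P, (emBetti (rggGraph A ρ P) k : ℝ≥0∞) ∂Measure.pi (fun _ => torusUnif A)
      ≤ ∫⁻ P, (#{t : Fin (k + 1) → Fin n | Function.Injective t ∧
          ∀ j : Fin k, torusDist A (P (t j.castSucc)) (P (t j.succ)) ≤ ρ} : ℝ≥0∞)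
          ∂Measure.pi (fun _ => torusUnif A) :=
        lintegral_mono fun P => Nat.cast_le.mpr (emBetti_rggGraph_le A ρ P k)
    _ ≤ (Fintype.card (Fin n) : ℝ≥0∞) ^ (k + 1) *
          ENNReal.ofReal (36 * Real.pi * ρ ^ 2 / A) ^ k :=
        lintegral_card_injective_chains_le (torusUnif A) (D := fun x y => torusDist A x y ≤ ρ)
          (measurable_torusDist A measurableSet_Iic) (torusUnif_setOf_torusDist_le hA hρ hρA) k
    _ = _ := by
        rw [ENNReal.ofReal_mul (by positivity), ENNReal.ofReal_pow (by positivity),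
          ENNReal.ofReal_pow (by positivity), Fintype.card_fin, ENNReal.ofReal_natCast]

lemma pow_succ_mul_mul_rpow_neg_sq_pow {x : ℝ} (hx : 0 < x) (c q : ℝ) (k : ℕ) :
    x ^ (k + 1) * (c * (x ^ (-q)) ^ 2) ^ k = c ^ k * x ^ ((k : ℝ) + 1 - 2 * q * k) := by
  have hsq : (x ^ (-q)) ^ 2 = x ^ (-q * 2) := by
    exact_mod_cast (Real.rpow_mul_natCast hx.le (-q) 2).symm
  have hpow : (x ^ (-q * 2)) ^ k = x ^ (-q * 2 * k) := (Real.rpow_mul_natCast hx.le _ k).symm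
  have hsucc : x ^ (k + 1) = x ^ ((k : ℝ) + 1) := by
    rw [← Real.rpow_natCast]
    push_cast
    rfl
  rw [mul_pow, hsq, hpow, hsucc, mul_left_comm, ← Real.rpow_add hx]
  ring_nf

lemma tendsto_natCast_rpow_of_neg {e : ℝ} (he : e < 0) :
    Filter.Tendsto (fun n : ℕ => (n : ℝ) ^ e) Filter.atTop (nhds 0) := by
  have := (tendsto_rpow_neg_atTop (neg_pos.mpr he)).comp tendsto_natCast_atTop_atTop
  rwa [neg_neg] at this

/-- Theorem 5.8, vanishing threshold for RGGs: fix `A > 0`, `k ≥ 1` and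
`q > (k+1)/(2k)`.  With radius `r_n = n^{-q}`, the expected Betti number
`E[β_{k,k}(G(n, r_n, A))]` tends to `0` as `n → ∞`. -/
theorem rgg_expected_betti_tendsto_zero (A : ℝ) (hA : 0 < A) (k : ℕ) (hk : 1 ≤ k)
    (q : ℝ) (hq : ((k : ℝ) + 1) / (2 * (k : ℝ)) < q) :
    Filter.Tendsto
      (fun n : ℕ => ∫⁻ P, (emBetti (rggGraph A ((n : ℝ) ^ (-q)) P) k : ℝ≥0∞)
        ∂ rggSample A n)
      Filter.atTop (nhds 0) := by
  have hk0 : (0 : ℝ) < k := by exact_mod_cast hk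
  have hq0 : 0 < q := (by positivity : (0 : ℝ) < (k + 1) / (2 * k)).trans hq
  have hexp : (k : ℝ) + 1 - 2 * q * k < 0 := by
    rw [div_lt_iff₀ (by positivity)] at hq
    linarith
  have hbound : Filter.Tendsto (fun n : ℕ => ENNReal.ofReal ((36 * Real.pi / A) ^ k *
      (n : ℝ) ^ ((k : ℝ) + 1 - 2 * q * k))) Filter.atTop (nhds 0) := by
    simpa using ENNReal.tendsto_ofReal ((tendsto_natCast_rpow_of_neg hexp).const_mul _)
  have hsmall : ∀ᶠ n : ℕ in Filter.atTop, 2 * (n : ℝ) ^ (-q) ≤ Real.sqrt A :=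
    ((tendsto_natCast_rpow_of_neg (neg_lt_zero.mpr hq0)).const_mul 2).eventually_le_const (by simpa using hA)
  refine tendsto_of_tendsto_of_tendsto_of_le_of_le' tendsto_const_nhds hbound
    (.of_forall fun _ => zero_le) ?_
  filter_upwards [Filter.eventually_gt_atTop 0, hsmall] with n hn hnA
  have hn' : (0 : ℝ) < n := by exact_mod_cast hn
  refine (lintegral_emBetti_rggGraph_le hA (by positivity) hnA n k).trans_eq ?_
  rw [← pow_succ_mul_mul_rpow_neg_sq_pow hn']
  congr 3
  ring
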